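/- The model P[0,1] is normal: for every ν ∈ P[0,1], every x ≥ E(ν) and every ε > 0, one has Linf>(x,ν) = inf{ KL(ζ,ν) : ζ ∈ P[0,1], x < E(ζ) < x + ε }. -/

import Mathlib

open MeasureTheory Filter Set ProbabilityTheory
open scoped ENNReal NNReal

noncomputable section

/-- Mean of a (probability) measure on ℝ. -/
def Emean (ν : Measure ℝ) : ℝ := ∫ x, x ∂ν

open Classical in
/-- Kullback–Leibler divergence `∫ ln (dζ/dν) dζ`, equal to `+∞` if `ζ` is not absolutely
continuous with respect to `ν` (or the integral is not defined). -/
def KL (ζ ν : Measure ℝ) : ℝ≥0∞ :=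
  if ζ ≪ ν ∧ Integrable (fun x => Real.log ((ζ.rnDeriv ν x).toReal)) ζ
  then ENNReal.ofReal (∫ x, Real.log ((ζ.rnDeriv ν x).toReal) ∂ζ)
  else ⊤

/-- Log-moment generating function `φ_ν`, with values in `EReal` (so that `+∞` is allowed). -/
def logMgf (ν : Measure ℝ) (l : ℝ) : EReal :=
  ENNReal.log (∫⁻ x, ENNReal.ofReal (Real.exp (l * x)) ∂ν)

/-- Fenchel–Legendre transform `φ*_ν(x) = sup_λ (λ x − φ_ν(λ))`. -/
def phiStar (ν : Measure ℝ) (x : ℝ) : EReal :=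
  ⨆ l : ℝ, ((l * x : ℝ) : EReal) - logMgf ν l

/-- `Φ(ν', ν) = inf_{x ∈ [E(ν'), E(ν)]} (φ*_{ν'}(x) + φ*_ν(x))`. -/
def Phi (ν' ν : Measure ℝ) : EReal :=
  ⨅ x ∈ Set.Icc (Emean ν') (Emean ν), (phiStar ν' x + phiStar ν x)

/-- The model `P[0,1]` of all Borel probability measures on `[0,1]` (seen as measures on ℝ). -/
def Pcc : Set (Measure ℝ) :=
  {ζ | IsProbabilityMeasure ζ ∧ ζ (Set.Icc (0:ℝ) 1)ᶜ = 0}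

/-- `Linf<(x, ν) = inf {KL(ζ, ν) : ζ ∈ D, E(ζ) < x}`, with `inf ∅ = +∞`. -/
def Linflt (D : Set (Measure ℝ)) (x : ℝ) (ν : Measure ℝ) : ℝ≥0∞ :=
  ⨅ ζ ∈ {ζ ∈ D | Emean ζ < x}, KL ζ ν

/-- `Linf≤(x, ν) = inf {KL(ζ, ν) : ζ ∈ D, E(ζ) ≤ x}`, with `inf ∅ = +∞`. -/
def Linfle (D : Set (Measure ℝ)) (x : ℝ) (ν : Measure ℝ) : ℝ≥0∞ :=
  ⨅ ζ ∈ {ζ ∈ D | Emean ζ ≤ x}, KL ζ ν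

/-- `Linf>(x, ν) = inf {KL(ζ, ν) : ζ ∈ D, E(ζ) > x}`, with `inf ∅ = +∞`. -/
def Linfgt (D : Set (Measure ℝ)) (x : ℝ) (ν : Measure ℝ) : ℝ≥0∞ :=
  ⨅ ζ ∈ {ζ ∈ D | x < Emean ζ}, KL ζ ν

/-- `Linf≥(x, ν) = inf {KL(ζ, ν) : ζ ∈ D, E(ζ) ≥ x}`, with `inf ∅ = +∞`. -/
def Linfge (D : Set (Measure ℝ)) (x : ℝ) (ν : Measure ℝ) : ℝ≥0∞ :=
  ⨅ ζ ∈ {ζ ∈ D | x ≤ Emean ζ}, KL ζ ν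

/-- Closed support of a measure on ℝ. -/
def msupport (ν : Measure ℝ) : Set ℝ := {x | ∀ U ∈ nhds x, ν U ≠ 0}

/-- Lower end `m(ν)` of the closed support of `ν`. -/
def mMin (ν : Measure ℝ) : ℝ := sInf (msupport ν)

/-- Upper end `M(ν)` of the closed support of `ν`. -/
def mMax (ν : Measure ℝ) : ℝ := sSup (msupport ν)

/-! Given `ζ ∈ P[0,1]` with `E(ζ) > x`, the mixtures `(1 - t) ν + t ζ` stay in `P[0,1]` and their
means sweep `[E(ν), E(ζ)]` linearly, so one of them has its mean in `(x, x + ε)`. Their density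
with respect to `ν` is `1 - t + t · dζ/dν`, so convexity of `klFun` (with `klFun 1 = 0`) bounds
their divergence from `ν` pointwise by that of `ζ`. -/

open InformationTheory

/-- Mathlib's `klDiv` adds the correction `ν.real univ - ζ.real univ`, which vanishes here. -/
lemma KL_eq_klDiv {ζ ν : Measure ℝ} (h : ζ univ = ν univ) : KL ζ ν = klDiv ζ ν := by
  simp only [KL, klDiv_def, llr, measureReal_def, h, add_sub_cancel_right]
  rfl

section Mixture

variable {α : Type*} [MeasurableSpace α] {ν ζ : Measure α} {t : ℝ≥0}

lemma isProbabilityMeasure_mixture [IsProbabilityMeasure ν] [IsProbabilityMeasure ζ]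
    (ht : t ≤ 1) : IsProbabilityMeasure ((1 - t) • ν + t • ζ) := by
  constructor
  rw [Measure.add_apply, Measure.smul_apply, Measure.smul_apply, measure_univ, measure_univ,
    ENNReal.smul_def, ENNReal.smul_def, smul_eq_mul, smul_eq_mul, mul_one, mul_one,
    ← ENNReal.coe_add, tsub_add_cancel_of_le ht, ENNReal.coe_one]

lemma rnDeriv_mixture [IsFiniteMeasure ν] [IsFiniteMeasure ζ] :
    ((1 - t) • ν + t • ζ).rnDeriv ν =ᵐ[ν] fun x ↦ (1 - t : ℝ≥0) + t * ζ.rnDeriv ν x := by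
  filter_upwards [Measure.rnDeriv_add ((1 - t) • ν) (t • ζ) ν,
    Measure.rnDeriv_smul_left ν ν (1 - t), Measure.rnDeriv_smul_left ζ ν t,
    Measure.rnDeriv_self ν] with x h_add h_left h_right h_self
  rw [h_add, Pi.add_apply, h_left, h_right, Pi.smul_apply, Pi.smul_apply, h_self,
    ENNReal.smul_def, ENNReal.smul_def, smul_eq_mul, smul_eq_mul, mul_one]

lemma klFun_one_sub_add_mul_le {s : ℝ} (hs : 0 ≤ s) {t : ℝ} (ht0 : 0 ≤ t) (ht1 : t ≤ 1) :
    klFun ((1 - t) + t * s) ≤ klFun s := by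
  have h := convexOn_klFun.2 (mem_Ici.2 zero_le_one) (mem_Ici.2 hs) (sub_nonneg.2 ht1) ht0
    (sub_add_cancel 1 t)
  simp only [smul_eq_mul, mul_one, klFun_one, mul_zero, zero_add] at h
  nlinarith [klFun_nonneg hs]

lemma klDiv_mixture_le [IsFiniteMeasure ν] [IsFiniteMeasure ζ] (ht : t ≤ 1) :
    klDiv ((1 - t) • ν + t • ζ) ν ≤ klDiv ζ ν := by
  by_cases hac : ζ ≪ ν
  swap
  · simp [hac]
  have hac_mix : (1 - t) • ν + t • ζ ≪ ν :=
    .add_left (.smul_left .rfl _) (hac.smul_left _)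
  rw [klDiv_eq_lintegral_klFun_of_ac hac, klDiv_eq_lintegral_klFun_of_ac hac_mix]
  refine lintegral_mono_ae ?_
  filter_upwards [rnDeriv_mixture (t := t) (ζ := ζ), Measure.rnDeriv_lt_top ζ ν]
    with x h_mix h_fin
  rw [h_mix, ENNReal.toReal_add (by simp) (ENNReal.mul_ne_top (by simp) h_fin.ne),
    ENNReal.toReal_mul, ENNReal.coe_toReal, ENNReal.coe_toReal, NNReal.coe_sub ht, NNReal.coe_one]
  exact ENNReal.ofReal_le_ofReal (klFun_one_sub_add_mul_le ENNReal.toReal_nonneg t.2 ht)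

end Mixture

lemma integrable_id_of_mem_Pcc {ν : Measure ℝ} (hν : ν ∈ Pcc) : Integrable (fun x ↦ x) ν := by
  have := hν.1
  refine Integrable.of_bound (by fun_prop) 1 ?_
  filter_upwards [show ∀ᵐ x ∂ν, x ∈ Icc (0 : ℝ) 1 from hν.2] with x hx
  rw [Real.norm_eq_abs, abs_le]
  exact ⟨by linarith [hx.1], hx.2⟩

lemma mixture_mem_Pcc {ν ζ : Measure ℝ} (hν : ν ∈ Pcc) (hζ : ζ ∈ Pcc) {t : ℝ≥0} (ht : t ≤ 1) :
    (1 - t) • ν + t • ζ ∈ Pcc := by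
  have := hν.1; have := hζ.1
  refine ⟨isProbabilityMeasure_mixture ht, ?_⟩
  simp [hν.2, hζ.2]

lemma Emean_mixture {ν ζ : Measure ℝ} (hν : Integrable (fun x ↦ x) ν)
    (hζ : Integrable (fun x ↦ x) ζ) {t : ℝ≥0} (ht : t ≤ 1) :
    Emean ((1 - t) • ν + t • ζ) = (1 - t) * Emean ν + t * Emean ζ := by
  rw [Emean, integral_add_measure hν.smul_measure_nnreal hζ.smul_measure_nnreal,
    integral_smul_nnreal_measure, integral_smul_nnreal_measure, NNReal.smul_def,
    NNReal.smul_def, NNReal.coe_sub ht, NNReal.coe_one, smul_eq_mul, smul_eq_mul, Emean, Emean]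

lemma exists_Emean_mixture_eq {ν ζ : Measure ℝ} (hν : Integrable (fun x ↦ x) ν)
    (hζ : Integrable (fun x ↦ x) ζ) {y : ℝ} (hy : y ∈ Icc (Emean ν) (Emean ζ)) :
    ∃ t : ℝ≥0, t ≤ 1 ∧ Emean ((1 - t) • ν + t • ζ) = y := by
  rcases hy.1.eq_or_lt with hνy | hνy
  · exact ⟨0, zero_le_one, by simp [hνy]⟩
  have hνζ : 0 < Emean ζ - Emean ν := by linarith [hy.2]
  set s := (y - Emean ν) / (Emean ζ - Emean ν)
  have hs : s.toNNReal ≤ 1 := Real.toNNReal_le_one.2 ((div_le_one hνζ).2 (by linarith [hy.2]))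
  refine ⟨s.toNNReal, hs, ?_⟩
  rw [Emean_mixture hν hζ hs,
    Real.coe_toNNReal _ (div_nonneg (by linarith) hνζ.le)]
  field_simp
  ring

/-- The model `P[0,1]` is normal: for every `ν ∈ P[0,1]`, every `x ≥ E(ν)` and every `ε > 0`,
`Linf>(x,ν) = inf {KL(ζ,ν) : ζ ∈ P[0,1], x < E(ζ) < x + ε}`. -/
theorem Pcc_is_normal :
    ∀ ν ∈ Pcc, ∀ x : ℝ, Emean ν ≤ x → ∀ ε : ℝ, 0 < ε →
      Linfgt Pcc x ν = ⨅ ζ ∈ {ζ ∈ Pcc | x < Emean ζ ∧ Emean ζ < x + ε}, KL ζ ν := by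
  intro ν hν x hx ε hε
  refine le_antisymm (le_iInf₂ fun ζ hζ ↦ iInf₂_le ζ ⟨hζ.1, hζ.2.1⟩) (le_iInf₂ fun ζ hζ ↦ ?_)
  obtain ⟨hζ, hxζ⟩ := hζ
  have := hν.1; have := hζ.1
  obtain ⟨y, hxy, hy⟩ := exists_between (lt_min (lt_add_of_pos_right x hε) hxζ)
  obtain ⟨t, ht, hEy⟩ := exists_Emean_mixture_eq (integrable_id_of_mem_Pcc hν)
    (integrable_id_of_mem_Pcc hζ) ⟨hx.trans hxy.le, (hy.trans_le (min_le_right _ _)).le⟩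
  have := isProbabilityMeasure_mixture (ν := ν) (ζ := ζ) ht
  calc ⨅ ζ ∈ {ζ ∈ Pcc | x < Emean ζ ∧ Emean ζ < x + ε}, KL ζ ν
      ≤ KL ((1 - t) • ν + t • ζ) ν :=
        iInf₂_le _ ⟨mixture_mem_Pcc hν hζ ht, hEy ▸ hxy, hEy ▸ hy.trans_le (min_le_left _ _)⟩
    _ ≤ KL ζ ν := by
        rw [KL_eq_klDiv (by simp), KL_eq_klDiv (by simp)]
        exact klDiv_mixture_le ht

end
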